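/- arXiv:1604.00922 — 9 statements merged into one kernel-verified Lean document; each statement's English description precedes it below -/
import Mathlib

section
/- If R1 and R2 are two unipolar representations of the same graph G, with s1 and s2 side cliques respectively, then |s1 - s2| ≤ 1. -/
open SimpleGraph Set

variable {V : Type*}

/-- Closed neighbourhood N⁺(v) = N(v) ∪ {v}. -/
def closedNbhd (G : SimpleGraph V) (v : V) : Set V := {u | G.Adj v u ∨ u = v}

/-- S is a clique (as a set of vertices). -/
def IsCliqueSet (G : SimpleGraph V) (S : Set V) : Prop :=
  ∀ ⦃u⦄, u ∈ S → ∀ ⦃v⦄, v ∈ S → u ≠ v → G.Adj u v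

/-- S is an independent set. -/
def IsIndepSetOn (G : SimpleGraph V) (S : Set V) : Prop :=
  ∀ ⦃u⦄, u ∈ S → ∀ ⦃v⦄, v ∈ S → ¬ G.Adj u v

/-- The induced subgraph on S is a disjoint union of cliques (no induced P3). -/
def IsClusterOn (G : SimpleGraph V) (S : Set V) : Prop :=
  ∀ ⦃u v w : V⦄, u ∈ S → v ∈ S → w ∈ S → G.Adj u v → G.Adj v w → u ≠ w → G.Adj u w

/-- (V0, V1) is a unipolar representation of G. -/
def IsUnipolarRep (G : SimpleGraph V) (V0 V1 : Set V) : Prop :=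
  V0 ∪ V1 = Set.univ ∧ Disjoint V0 V1 ∧ IsCliqueSet G V0 ∧ IsClusterOn G V1

def IsUnipolar (G : SimpleGraph V) : Prop := ∃ V0 V1, IsUnipolarRep G V0 V1

/-- C is a side clique: a nonempty clique inside V1 closed under adjacency within V1,
    i.e. a connected component (maximal clique) of G[V1]. -/
def IsSideClique (G : SimpleGraph V) (V1 C : Set V) : Prop :=
  C ⊆ V1 ∧ C.Nonempty ∧ IsCliqueSet G C ∧
    ∀ ⦃u⦄, u ∈ C → ∀ ⦃v⦄, v ∈ V1 → G.Adj u v → v ∈ C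

/-- The number of side cliques of G[V1]. -/
noncomputable def numSideCliques (G : SimpleGraph V) (V1 : Set V) : ℕ :=
  {C : Set V | IsSideClique G V1 C}.ncard

/-- Independence number α(G). -/
noncomputable def indepNum' (G : SimpleGraph V) : ℕ :=
  sSup {n | ∃ S : Set V, S.ncard = n ∧ IsIndepSetOn G S}

/-- Clique number ω(G). -/
noncomputable def cliqueNum' (G : SimpleGraph V) : ℕ :=
  sSup {n | ∃ S : Set V, S.ncard = n ∧ IsCliqueSet G S}

/-- Clique cover number χ̄(G). -/
noncomputable def cliqueCoverNum' (G : SimpleGraph V) : ℕ :=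
  sInf {n | ∃ F : Finset (Set V), F.card = n ∧
    (∀ S ∈ F, IsCliqueSet G S) ∧ ∀ v : V, ∃ S ∈ F, v ∈ S}

/-!
Distinct side cliques of any set `V₁` are nonadjacent, so a clique meets at most one of them and
the side cliques number at most the size of any clique cover. For a unipolar representation
`(V₀', V₁')`, the clique `V₀'` together with the side cliques of `V₁'` covers the graph, which gives
`s₁ ≤ s₂ + 1`; the other inequality is symmetric.
-/

namespace IsSideClique

variable {G : SimpleGraph V} {V1 C D : Set V}

lemma subset_of_mem (hC : IsSideClique G V1 C) (hD : IsSideClique G V1 D) {v : V}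
    (hvC : v ∈ C) (hvD : v ∈ D) : C ⊆ D := by
  intro u huC
  rcases eq_or_ne v u with rfl | hne
  · exact hvD
  · exact hD.2.2.2 hvD (hC.1 huC) (hC.2.2.1 hvC huC hne)

lemma eq_of_mem (hC : IsSideClique G V1 C) (hD : IsSideClique G V1 D) {v : V}
    (hvC : v ∈ C) (hvD : v ∈ D) : C = D :=
  (hC.subset_of_mem hD hvC hvD).antisymm (hD.subset_of_mem hC hvD hvC)

lemma eq_of_inter_clique_nonempty (hC : IsSideClique G V1 C) (hD : IsSideClique G V1 D)
    {K : Set V} (hK : IsCliqueSet G K) (hCK : (C ∩ K).Nonempty) (hDK : (D ∩ K).Nonempty) :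
    C = D := by
  obtain ⟨u, huC, huK⟩ := hCK
  obtain ⟨w, hwD, hwK⟩ := hDK
  rcases eq_or_ne u w with rfl | hne
  · exact hC.eq_of_mem hD huC hwD
  · exact hC.eq_of_mem hD (hC.2.2.2 huC (hD.1 hwD) (hK huK hwK hne)) hwD

end IsSideClique

lemma IsClusterOn.exists_isSideClique_mem {G : SimpleGraph V} {V1 : Set V}
    (hV1 : IsClusterOn G V1) {v : V} (hv : v ∈ V1) : ∃ C, IsSideClique G V1 C ∧ v ∈ C := by
  refine ⟨{u | u ∈ V1 ∧ (u = v ∨ G.Adj v u)}, ⟨fun u hu => hu.1, ⟨v, hv, .inl rfl⟩, ?_, ?_⟩,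
    hv, .inl rfl⟩
  · rintro u ⟨hu, rfl | hvu⟩ w ⟨hw, rfl | hvw⟩ hne
    · exact absurd rfl hne
    · exact hvw
    · exact hvu.symm
    · exact hV1 hu hv hw hvu.symm hvw hne
  · rintro u ⟨hu, rfl | hvu⟩ w hw huw
    · exact ⟨hw, .inr huw⟩
    · rcases eq_or_ne w v with rfl | hne
      · exact ⟨hw, .inl rfl⟩
      · exact ⟨hw, .inr (hV1 hv hu hw hvu huw hne.symm)⟩

lemma numSideCliques_le_ncard_of_cover [Finite V] {G : SimpleGraph V} (V1 : Set V)
    {𝒦 : Set (Set V)} (h𝒦 : ∀ K ∈ 𝒦, IsCliqueSet G K) (hcover : ∀ v, ∃ K ∈ 𝒦, v ∈ K) :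
    numSideCliques G V1 ≤ 𝒦.ncard := by
  have hpick : ∀ C, ∃ K, IsSideClique G V1 C → K ∈ 𝒦 ∧ (C ∩ K).Nonempty := by
    intro C
    by_cases hC : IsSideClique G V1 C
    · obtain ⟨v, hv⟩ := hC.2.1
      obtain ⟨K, hK, hvK⟩ := hcover v
      exact ⟨K, fun _ => ⟨hK, v, hv, hvK⟩⟩
    · exact ⟨∅, fun h => absurd h hC⟩
  choose f hf using hpick
  refine Set.ncard_le_ncard_of_injOn f (fun C hC => (hf C hC).1) ?_ (Set.toFinite _)
  intro C hC D hD hCD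
  have hDC : (D ∩ f C).Nonempty := hCD ▸ (hf D hD).2
  exact hC.eq_of_inter_clique_nonempty hD (h𝒦 _ (hf C hC).1) (hf C hC).2 hDC

lemma numSideCliques_le_numSideCliques_add_one [Finite V] {G : SimpleGraph V}
    (V1 : Set V) {V0' V1' : Set V} (hcov : V0' ∪ V1' = Set.univ) (hV0' : IsCliqueSet G V0')
    (hV1' : IsClusterOn G V1') : numSideCliques G V1 ≤ numSideCliques G V1' + 1 := by
  refine (numSideCliques_le_ncard_of_cover V1 (𝒦 := insert V0' {C | IsSideClique G V1' C})
    ?_ ?_).trans (Set.ncard_insert_le _ _)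
  · rintro K (rfl | hK)
    exacts [hV0', hK.2.2.1]
  · intro v
    rcases (Set.mem_union _ _ _).mp (hcov ▸ Set.mem_univ v) with hv | hv
    · exact ⟨V0', Set.mem_insert _ _, hv⟩
    · obtain ⟨C, hC, hvC⟩ := hV1'.exists_isSideClique_mem hv
      exact ⟨C, Set.mem_insert_of_mem _ hC, hvC⟩

/-- Two unipolar representations of the same graph have numbers of side cliques
    differing by at most one. -/
theorem stmt_1 [Fintype V] (G : SimpleGraph V) (V0 V1 V0' V1' : Set V)
    (hR1 : IsUnipolarRep G V0 V1) (hR2 : IsUnipolarRep G V0' V1') :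
    numSideCliques G V1 ≤ numSideCliques G V1' + 1 ∧
      numSideCliques G V1' ≤ numSideCliques G V1 + 1 :=
  ⟨numSideCliques_le_numSideCliques_add_one V1 hR2.1 hR2.2.2.1 hR2.2.2.2,
    numSideCliques_le_numSideCliques_add_one V1' hR1.1 hR1.2.2.1 hR1.2.2.2⟩
end

section
/- Let (V0, V1) be a unipolar representation of a graph G, let u be a vertex in a side clique C and let v ∈ V0 with u not adjacent to v. Then the set N⁺(u) \ N⁺(v) is a clique contained in C. -/
open SimpleGraph Set

variable {V : Type*}

lemma IsCliqueSet.subset {G : SimpleGraph V} {S T : Set V} (hS : IsCliqueSet G S) (hTS : T ⊆ S) :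
    IsCliqueSet G T :=
  fun _ ha _ hb => hS (hTS ha) (hTS hb)

lemma IsCliqueSet.subset_closedNbhd {G : SimpleGraph V} {S : Set V} {v : V}
    (hS : IsCliqueSet G S) (hv : v ∈ S) : S ⊆ closedNbhd G v := by
  intro w hw
  by_cases hwv : w = v
  · exact Or.inr hwv
  · exact Or.inl (hS hv hw (Ne.symm hwv))

lemma IsSideClique.closedNbhd_inter_subset {G : SimpleGraph V} {V1 C : Set V} {u : V}
    (hC : IsSideClique G V1 C) (hu : u ∈ C) : closedNbhd G u ∩ V1 ⊆ C := by
  rintro w ⟨hw | rfl, hw1⟩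
  · exact hC.2.2.2 hu hw1 hw
  · exact hu

lemma IsUnipolarRep.closedNbhd_diff_subset {G : SimpleGraph V} {V0 V1 : Set V} {v : V}
    (hR : IsUnipolarRep G V0 V1) (hv : v ∈ V0) (u : V) :
    closedNbhd G u \ closedNbhd G v ⊆ closedNbhd G u ∩ V1 := by
  rintro w ⟨hwu, hwv⟩
  have hw0 : w ∉ V0 := fun hw0 => hwv (hR.2.2.1.subset_closedNbhd hv hw0)
  have hw : w ∈ V0 ∪ V1 := hR.1 ▸ Set.mem_univ w
  exact ⟨hwu, hw.resolve_left hw0⟩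

theorem stmt_3_general (G : SimpleGraph V) (V0 V1 C : Set V) (u v : V)
    (hR : IsUnipolarRep G V0 V1) (hC : IsSideClique G V1 C) (hu : u ∈ C)
    (hv : v ∈ V0) :
    closedNbhd G u \ closedNbhd G v ⊆ C ∧
      IsCliqueSet G (closedNbhd G u \ closedNbhd G v) := by
  have hsub : closedNbhd G u \ closedNbhd G v ⊆ C :=
    (hR.closedNbhd_diff_subset hv u).trans (hC.closedNbhd_inter_subset hu)
  exact ⟨hsub, hC.2.2.1.subset hsub⟩

/-- If u is in a side clique C and v ∈ V0 is non-adjacent to u, then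
    N⁺(u) \ N⁺(v) is a clique contained in C. -/
theorem stmt_3 (G : SimpleGraph V) (V0 V1 C : Set V) (u v : V)
    (hR : IsUnipolarRep G V0 V1) (hC : IsSideClique G V1 C) (hu : u ∈ C)
    (hv : v ∈ V0) (hna : ¬ G.Adj u v) :
    closedNbhd G u \ closedNbhd G v ⊆ C ∧
      IsCliqueSet G (closedNbhd G u \ closedNbhd G v) :=
  stmt_3_general G V0 V1 C u v hR hC hu hv
end

section
/- Let (V0, V1) be a unipolar representation of a graph G, let u be in a side clique, let v ∈ V0 be non-adjacent to u, and suppose N⁺(v) \ N⁺(u) is a clique. Then N⁺(v) \ N⁺(u) intersects at most one side clique of the representation. -/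
open SimpleGraph Set

variable {V : Type*}

namespace IsSideClique

variable {G : SimpleGraph V} {V1 C C' : Set V} {x : V}

theorem subset_of_mem_s5 (hC : IsSideClique G V1 C) (hC' : IsSideClique G V1 C')
    (hx : x ∈ C) (hx' : x ∈ C') : C ⊆ C' := by
  intro w hw
  rcases eq_or_ne w x with rfl | hne
  · exact hx'
  · exact hC'.2.2.2 hx' (hC.1 hw) (hC.2.2.1 hx hw hne.symm)

theorem eq_of_mem_s5 (hC : IsSideClique G V1 C) (hC' : IsSideClique G V1 C')
    (hx : x ∈ C) (hx' : x ∈ C') : C = C' :=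
  (hC.subset_of_mem_s5 hC' hx hx').antisymm (hC'.subset_of_mem_s5 hC hx' hx)

end IsSideClique

theorem IsCliqueSet.eq_of_inter_sideClique_nonempty {G : SimpleGraph V} {V1 S C C' : Set V}
    (hS : IsCliqueSet G S) (hC : IsSideClique G V1 C) (hC' : IsSideClique G V1 C')
    (hSC : (S ∩ C).Nonempty) (hSC' : (S ∩ C').Nonempty) : C = C' := by
  obtain ⟨x, hxS, hxC⟩ := hSC
  obtain ⟨y, hyS, hyC'⟩ := hSC'
  rcases eq_or_ne x y with rfl | hne
  · exact hC.eq_of_mem_s5 hC' hxC hyC'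
  · exact hC.eq_of_mem_s5 hC' (hC.2.2.2 hxC (hC'.1 hyC') (hS hxS hyS hne)) hyC'

theorem stmt_5_general (G : SimpleGraph V) (V1 : Set V) (u v : V)
    (hclq : IsCliqueSet G (closedNbhd G v \ closedNbhd G u)) :
    ∀ C1 C2 : Set V, IsSideClique G V1 C1 → IsSideClique G V1 C2 →
      ((closedNbhd G v \ closedNbhd G u) ∩ C1).Nonempty →
      ((closedNbhd G v \ closedNbhd G u) ∩ C2).Nonempty → C1 = C2 :=
  fun _ _ h1 h2 => hclq.eq_of_inter_sideClique_nonempty h1 h2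

/-- If u is in a side clique, v ∈ V0 is non-adjacent to u, and N⁺(v) \ N⁺(u) is a
    clique, then N⁺(v) \ N⁺(u) intersects at most one side clique. -/
theorem stmt_5 (G : SimpleGraph V) (V0 V1 Su : Set V) (u v : V)
    (hR : IsUnipolarRep G V0 V1) (hSu : IsSideClique G V1 Su) (hu : u ∈ Su)
    (hv : v ∈ V0) (hna : ¬ G.Adj u v)
    (hclq : IsCliqueSet G (closedNbhd G v \ closedNbhd G u)) :
    ∀ C1 C2 : Set V, IsSideClique G V1 C1 → IsSideClique G V1 C2 →
      ((closedNbhd G v \ closedNbhd G u) ∩ C1).Nonempty →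
      ((closedNbhd G v \ closedNbhd G u) ∩ C2).Nonempty → C1 = C2 :=
  stmt_5_general G V1 u v hclq
end

section
/- Let (V0, V1) be a unipolar representation of a graph G, let u be in a side clique S_u, and let v ∈ V0 be non-adjacent to u with N⁺(v) \ N⁺(u) a clique. Then the set N⁺(u) ∪ N⁺(v) contains S_u and all of V0, and intersects at most one side clique other than S_u. Consequently, the number of side cliques of the induced representation on V(G) \ (N⁺(u) ∪ N⁺(v)) is s - 1 or s - 2, where s is the number of side cliques of (V0, V1). -/
/-!
A side clique `C ≠ S_u` cannot meet `N⁺(u)`, since a neighbour of `u` in `V₁` lies in `S_u`. So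
it can meet `N⁺(u) ∪ N⁺(v)` only inside the clique `N⁺(v) \ N⁺(u)`, and two side cliques meeting
a common clique coincide, because an edge between them would merge them. Deleting a set `N` from
`V₁` shrinks each side clique `C ⊄ N` to the side clique `C \ N` and kills exactly the side cliques
contained in `N`; here these are `S_u` and at most one other.
-/

open SimpleGraph Set

variable {V : Type*}

variable {G : SimpleGraph V}

lemma IsCliqueSet.subset_closedNbhd_s6 {K : Set V} (hK : IsCliqueSet G K) {u : V} (hu : u ∈ K) :
    K ⊆ closedNbhd G u := by
  intro x hx
  rcases eq_or_ne x u with rfl | hne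
  · exact Or.inr rfl
  · exact Or.inl (hK hu hx hne.symm)

namespace IsSideClique

variable {V1 C C1 C2 : Set V}

lemma eq_of_mem_s6 (h1 : IsSideClique G V1 C1) (h2 : IsSideClique G V1 C2) {w : V}
    (hw1 : w ∈ C1) (hw2 : w ∈ C2) : C1 = C2 := by
  have sub : ∀ {A B : Set V}, IsSideClique G V1 A → IsSideClique G V1 B → w ∈ A → w ∈ B →
      A ⊆ B := by
    intro A B hA hB hwA hwB x hx
    rcases eq_or_ne x w with rfl | hne
    · exact hwB
    · exact hB.2.2.2 hwB (hA.1 hx) (hA.2.2.1 hwA hx hne.symm)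
  exact (sub h1 h2 hw1 hw2).antisymm (sub h2 h1 hw2 hw1)

lemma notMem_closedNbhd_of_ne {Su : Set V} {u w : V} (hSu : IsSideClique G V1 Su) (hu : u ∈ Su)
    (hC : IsSideClique G V1 C) (hCSu : C ≠ Su) (hw : w ∈ C) : w ∉ closedNbhd G u := by
  rintro (hadj | rfl)
  · exact hCSu (hC.eq_of_mem_s6 hSu hw (hSu.2.2.2 hu (hC.1 hw) hadj))
  · exact hCSu (hC.eq_of_mem_s6 hSu hw hu)

lemma eq_of_inter_clique_nonempty_s6 {K : Set V} (hK : IsCliqueSet G K)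
    (h1 : IsSideClique G V1 C1) (h2 : IsSideClique G V1 C2)
    (hK1 : (K ∩ C1).Nonempty) (hK2 : (K ∩ C2).Nonempty) : C1 = C2 := by
  obtain ⟨w1, hw1K, hw1⟩ := hK1
  obtain ⟨w2, hw2K, hw2⟩ := hK2
  rcases eq_or_ne w1 w2 with rfl | hne
  · exact h1.eq_of_mem_s6 h2 hw1 hw2
  · exact h1.eq_of_mem_s6 h2 (h1.2.2.2 hw1 (h2.1 hw2) (hK hw1K hw2K hne)) hw2

lemma sdiff {N : Set V} (hC : IsSideClique G V1 C) (hne : (C \ N).Nonempty) :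
    IsSideClique G (V1 \ N) (C \ N) :=
  ⟨fun _ hx => ⟨hC.1 hx.1, hx.2⟩, hne, fun _ hx _ hy hxy => hC.2.2.1 hx.1 hy.1 hxy,
    fun _ hx _ hy hxy => ⟨hC.2.2.2 hx.1 hy.1 hxy, hy.2⟩⟩

lemma eq_sdiff_of_mem {N D : Set V} (hD : IsSideClique G (V1 \ N) D) (hC : IsSideClique G V1 C)
    {w : V} (hwD : w ∈ D) (hwC : w ∈ C) : D = C \ N :=
  hD.eq_of_mem_s6 (hC.sdiff ⟨w, hwC, (hD.1 hwD).2⟩) hwD ⟨hwC, (hD.1 hwD).2⟩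

end IsSideClique

lemma IsClusterOn.exists_sideClique_mem {V1 : Set V} (hV1 : IsClusterOn G V1) {w : V}
    (hw : w ∈ V1) : ∃ C, IsSideClique G V1 C ∧ w ∈ C := by
  refine ⟨V1 ∩ closedNbhd G w, ⟨inter_subset_left, ⟨w, hw, Or.inr rfl⟩, ?_, ?_⟩, hw, Or.inr rfl⟩
  · rintro x ⟨hx, hxw | rfl⟩ y ⟨hy, hyw | rfl⟩ hxy
    · exact hV1 hx hw hy hxw.symm hyw hxy
    · exact hxw.symm
    · exact hyw
    · exact absurd rfl hxy
  · rintro x ⟨hx, hxw | rfl⟩ y hy hxy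
    · rcases eq_or_ne y w with rfl | hne
      · exact ⟨hy, Or.inr rfl⟩
      · exact ⟨hy, Or.inl (hV1 hw hx hy hxw hxy hne.symm)⟩
    · exact ⟨hy, Or.inl hxy⟩

lemma numSideCliques_sdiff_add_ncard [Finite V] {V1 : Set V} (hV1 : IsClusterOn G V1)
    (N : Set V) :
    numSideCliques G (V1 \ N) + {C | IsSideClique G V1 C ∧ C ⊆ N}.ncard =
      numSideCliques G V1 := by
  set S := {C | IsSideClique G V1 C}
  set T := {C | IsSideClique G V1 C ∧ C ⊆ N}
  have image_eq : {D | IsSideClique G (V1 \ N) D} = (· \ N) '' (S \ T) := by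
    ext D
    constructor
    · intro hD
      obtain ⟨w, hw⟩ := hD.2.1
      obtain ⟨C, hC, hwC⟩ := hV1.exists_sideClique_mem (hD.1 hw).1
      exact ⟨C, ⟨hC, fun hCT => (hD.1 hw).2 (hCT.2 hwC)⟩, (hD.eq_sdiff_of_mem hC hw hwC).symm⟩
    · rintro ⟨C, ⟨hC, hCN⟩, rfl⟩
      exact hC.sdiff (sdiff_nonempty.2 fun h => hCN ⟨hC, h⟩)
  have injOn : InjOn (· \ N) (S \ T) := by
    intro C1 h1 C2 h2 (heq : C1 \ N = C2 \ N)
    obtain ⟨w, hw⟩ := sdiff_nonempty.2 fun h => h1.2 ⟨h1.1, h⟩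
    exact h1.1.eq_of_mem_s6 h2.1 hw.1 (show w ∈ C2 \ N from heq ▸ hw).1
  rw [numSideCliques, image_eq, injOn.ncard_image]
  exact ncard_sdiff_add_ncard_of_subset fun _ hC => hC.1

theorem stmt_6_general [Fintype V] (G : SimpleGraph V) (V0 V1 Su : Set V) (u v : V)
    (hR : IsUnipolarRep G V0 V1) (hSu : IsSideClique G V1 Su) (hu : u ∈ Su)
    (hv : v ∈ V0)
    (hclq : IsCliqueSet G (closedNbhd G v \ closedNbhd G u)) :
    Su ⊆ closedNbhd G u ∪ closedNbhd G v ∧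
    V0 ⊆ closedNbhd G u ∪ closedNbhd G v ∧
    (∀ C1 C2 : Set V, IsSideClique G V1 C1 → IsSideClique G V1 C2 →
      C1 ≠ Su → C2 ≠ Su →
      ((closedNbhd G u ∪ closedNbhd G v) ∩ C1).Nonempty →
      ((closedNbhd G u ∪ closedNbhd G v) ∩ C2).Nonempty → C1 = C2) ∧
    (numSideCliques G (V1 \ (closedNbhd G u ∪ closedNbhd G v)) + 1 = numSideCliques G V1 ∨
      numSideCliques G (V1 \ (closedNbhd G u ∪ closedNbhd G v)) + 2 = numSideCliques G V1) := by
  obtain ⟨-, -, hV0, hV1⟩ := hR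
  set N := closedNbhd G u ∪ closedNbhd G v
  have hSuN : Su ⊆ N := (hSu.2.2.1.subset_closedNbhd_s6 hu).trans subset_union_left
  have hV0N : V0 ⊆ N := (hV0.subset_closedNbhd_s6 hv).trans subset_union_right
  have meets_clique : ∀ C, IsSideClique G V1 C → C ≠ Su → (N ∩ C).Nonempty →
      ((closedNbhd G v \ closedNbhd G u) ∩ C).Nonempty := by
    rintro C hC hCSu ⟨w, hwN, hwC⟩
    have hwu := hSu.notMem_closedNbhd_of_ne hu hC hCSu hwC
    exact ⟨w, ⟨hwN.resolve_left hwu, hwu⟩, hwC⟩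
  have uniq : ∀ C1 C2, IsSideClique G V1 C1 → IsSideClique G V1 C2 → C1 ≠ Su → C2 ≠ Su →
      (N ∩ C1).Nonempty → (N ∩ C2).Nonempty → C1 = C2 := fun C1 C2 h1 h2 hne1 hne2 hN1 hN2 =>
    IsSideClique.eq_of_inter_clique_nonempty_s6 hclq h1 h2
      (meets_clique C1 h1 hne1 hN1) (meets_clique C2 h2 hne2 hN2)
  refine ⟨hSuN, hV0N, uniq, ?_⟩
  have hcount := numSideCliques_sdiff_add_ncard hV1 N
  set T := {C | IsSideClique G V1 C ∧ C ⊆ N}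
  have others_le_one : (T \ {Su}).ncard ≤ 1 := by
    refine (ncard_le_one_iff (toFinite _)).2 fun {C1 C2} h1 h2 => ?_
    have inter_ne : ∀ C ∈ T, (N ∩ C).Nonempty := fun C hC =>
      hC.1.2.1.mono fun _ hx => ⟨hC.2 hx, hx⟩
    exact uniq C1 C2 h1.1.1 h2.1.1 h1.2 h2.2 (inter_ne C1 h1.1) (inter_ne C2 h2.1)
  have hT := ncard_sdiff_singleton_add_one (show Su ∈ T from ⟨hSu, hSuN⟩) (toFinite _)
  omega

/-- With u in side clique Su, v ∈ V0 non-adjacent to u and N⁺(v) \ N⁺(u) a clique: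
    N⁺(u) ∪ N⁺(v) contains Su and V0, intersects at most one other side clique, and
    removing it leaves s − 1 or s − 2 side cliques. -/
theorem stmt_6 [Fintype V] (G : SimpleGraph V) (V0 V1 Su : Set V) (u v : V)
    (hR : IsUnipolarRep G V0 V1) (hSu : IsSideClique G V1 Su) (hu : u ∈ Su)
    (hv : v ∈ V0) (hna : ¬ G.Adj u v)
    (hclq : IsCliqueSet G (closedNbhd G v \ closedNbhd G u)) :
    Su ⊆ closedNbhd G u ∪ closedNbhd G v ∧
    V0 ⊆ closedNbhd G u ∪ closedNbhd G v ∧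
    (∀ C1 C2 : Set V, IsSideClique G V1 C1 → IsSideClique G V1 C2 →
      C1 ≠ Su → C2 ≠ Su →
      ((closedNbhd G u ∪ closedNbhd G v) ∩ C1).Nonempty →
      ((closedNbhd G u ∪ closedNbhd G v) ∩ C2).Nonempty → C1 = C2) ∧
    (numSideCliques G (V1 \ (closedNbhd G u ∪ closedNbhd G v)) + 1 = numSideCliques G V1 ∨
      numSideCliques G (V1 \ (closedNbhd G u ∪ closedNbhd G v)) + 2 = numSideCliques G V1) :=
  stmt_6_general G V0 V1 Su u v hR hSu hu hv hclq
end

section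
/- Let (V0, V1) be a unipolar representation of a graph G and let u, v be two non-adjacent vertices both lying in side cliques (necessarily distinct). Then removing N⁺(u) ∪ N⁺(v) from G yields an induced subgraph whose induced representation has exactly s - 2 side cliques, where s is the number of side cliques of (V0, V1). -/
open SimpleGraph Set

variable {V : Type*}

/-! Within `V1`, the closed neighbourhood of a vertex of a side clique is that side clique, so
deleting `N⁺(u) ∪ N⁺(v)` from `V1` deletes the two side cliques of `u` and `v`, which differ
because `u` and `v` are non-adjacent. Deleting one side clique from `V1` leaves exactly the
other side cliques, since no edge joins distinct side cliques. -/

section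

variable {G : SimpleGraph V} {V1 C D : Set V}

namespace IsSideClique

theorem eq_of_mem_of_mem (hC : IsSideClique G V1 C) (hD : IsSideClique G V1 D) {x : V}
    (hxC : x ∈ C) (hxD : x ∈ D) : C = D := by
  have closed_subset : ∀ {A B : Set V}, IsSideClique G V1 A → IsSideClique G V1 B →
      x ∈ A → x ∈ B → A ⊆ B := by
    intro A B hA hB hxA hxB y hyA
    rcases eq_or_ne y x with rfl | hyx
    · exact hxB
    · exact hB.2.2.2 hxB (hA.1 hyA) (hA.2.2.1 hxA hyA hyx.symm)
  exact (closed_subset hC hD hxC hxD).antisymm (closed_subset hD hC hxD hxC)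

theorem mem_closedNbhd_iff (hC : IsSideClique G V1 C) {u x : V} (hu : u ∈ C) (hx : x ∈ V1) :
    x ∈ closedNbhd G u ↔ x ∈ C := by
  constructor
  · rintro (hadj | rfl)
    · exact hC.2.2.2 hu hx hadj
    · exact hu
  · intro hxC
    rcases eq_or_ne x u with rfl | hxu
    · exact Or.inr rfl
    · exact Or.inl (hC.2.2.1 hu hxC hxu.symm)

theorem diff_closedNbhd_union {Cu Cv : Set V} {u v : V} (hCu : IsSideClique G V1 Cu)
    (hu : u ∈ Cu) (hCv : IsSideClique G V1 Cv) (hv : v ∈ Cv) :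
    V1 \ (closedNbhd G u ∪ closedNbhd G v) = V1 \ (Cu ∪ Cv) := by
  ext x
  simp only [mem_sdiff, mem_union]
  exact and_congr_right fun hx => by
    rw [hCu.mem_closedNbhd_iff hu hx, hCv.mem_closedNbhd_iff hv hx]

theorem diff (hD : IsSideClique G V1 D) (hC : IsSideClique G V1 C) (hCD : C ≠ D) :
    IsSideClique G (V1 \ D) C :=
  ⟨fun _ hx => ⟨hC.1 hx, fun hxD => hCD (hC.eq_of_mem_of_mem hD hx hxD)⟩,
    hC.2.1, hC.2.2.1, fun _ ha _ hb hab => hC.2.2.2 ha hb.1 hab⟩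

/-- A side clique of `V1 \ D` stays closed in `V1`: a neighbour in `D` would pull it into `D`. -/
theorem of_diff (hD : IsSideClique G V1 D) (hC : IsSideClique G (V1 \ D) C) :
    IsSideClique G V1 C := by
  obtain ⟨hC1, hCne, hCclq, hCcl⟩ := hC
  refine ⟨fun x hx => (hC1 hx).1, hCne, hCclq, fun a ha b hb hab => hCcl ha ⟨hb, ?_⟩ hab⟩
  exact fun hbD => (hC1 ha).2 (hD.2.2.2 hbD (hC1 ha).1 hab.symm)

end IsSideClique

theorem setOf_isSideClique_diff (hD : IsSideClique G V1 D) :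
    {C | IsSideClique G (V1 \ D) C} = {C | IsSideClique G V1 C} \ {D} := by
  ext C
  constructor
  · intro hC
    obtain ⟨x, hx⟩ := hC.2.1
    exact ⟨hD.of_diff hC, fun hCD => (hC.1 hx).2 (hCD ▸ hx)⟩
  · rintro ⟨hC, hCD⟩
    exact hD.diff hC hCD

theorem numSideCliques_diff_add_one [Finite V] (hD : IsSideClique G V1 D) :
    numSideCliques G (V1 \ D) + 1 = numSideCliques G V1 := by
  rw [numSideCliques, numSideCliques, setOf_isSideClique_diff hD]
  exact ncard_sdiff_singleton_add_one (s := {C | IsSideClique G V1 C}) hD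

end

theorem stmt_7_general [Fintype V] (G : SimpleGraph V) (V1 Cu Cv : Set V) (u v : V)
    (hCu : IsSideClique G V1 Cu) (hu : u ∈ Cu)
    (hCv : IsSideClique G V1 Cv) (hv : v ∈ Cv)
    (hne : u ≠ v) (hna : ¬ G.Adj u v) :
    numSideCliques G (V1 \ (closedNbhd G u ∪ closedNbhd G v)) + 2 =
      numSideCliques G V1 := by
  have hCvCu : Cv ≠ Cu := fun h => hna (hCu.2.2.1 hu (h ▸ hv) hne)
  have hCv' : IsSideClique G (V1 \ Cu) Cv := hCu.diff hCv hCvCu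
  rw [hCu.diff_closedNbhd_union hu hCv hv, ← sdiff_sdiff, ← numSideCliques_diff_add_one hCu,
    ← numSideCliques_diff_add_one hCv']

/-- If u, v are non-adjacent vertices lying in side cliques, removing
    N⁺(u) ∪ N⁺(v) leaves exactly s − 2 side cliques. -/
theorem stmt_7 [Fintype V] (G : SimpleGraph V) (V0 V1 Cu Cv : Set V) (u v : V)
    (hR : IsUnipolarRep G V0 V1) (hCu : IsSideClique G V1 Cu) (hu : u ∈ Cu)
    (hCv : IsSideClique G V1 Cv) (hv : v ∈ Cv)
    (hne : u ≠ v) (hna : ¬ G.Adj u v) :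
    numSideCliques G (V1 \ (closedNbhd G u ∪ closedNbhd G v)) + 2 =
      numSideCliques G V1 :=
  stmt_7_general G V1 Cu Cv u v hCu hu hCv hv hne hna
end

section
/- Let (V0, V1) be a unipolar representation of a graph G, let I be a maximal independent set of G, and let c ∈ I ∩ V0. Suppose S is a side clique with S ∩ (⋃_{i ∈ I \ {c}} N⁺(i)) = ∅. Then c is adjacent to every vertex of S, so {c} ∪ S is a clique. -/
open SimpleGraph Set

variable {V : Type*}

theorem adj_of_notMem_biUnion_closedNbhd {G : SimpleGraph V} {I : Set V} {c w : V}
    (hmax : ∀ w ∉ I, ∃ i ∈ I, G.Adj w i) (hwc : w ≠ c)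
    (hw : w ∉ ⋃ i ∈ I \ {c}, closedNbhd G i) : G.Adj c w := by
  have hwI : w ∉ I := fun hwI => hw (mem_iUnion₂.mpr ⟨w, ⟨hwI, hwc⟩, Or.inr rfl⟩)
  obtain ⟨i, hiI, hwi⟩ := hmax w hwI
  by_cases hic : i = c
  · exact hic ▸ hwi.symm
  · exact absurd (mem_iUnion₂.mpr ⟨i, ⟨hiI, hic⟩, Or.inl hwi.symm⟩) hw

theorem IsCliqueSet.singleton_union {G : SimpleGraph V} {S : Set V} {c : V}
    (hS : IsCliqueSet G S) (hc : ∀ w ∈ S, G.Adj c w) : IsCliqueSet G ({c} ∪ S) := by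
  rintro u (rfl | hu) v (rfl | hv) huv
  · exact absurd rfl huv
  · exact hc v hv
  · exact (hc u hu).symm
  · exact hS hu hv huv

theorem stmt_10_general (G : SimpleGraph V) (V0 V1 I S : Set V) (c : V)
    (hR : IsUnipolarRep G V0 V1)
    (hmax : ∀ w ∉ I, ∃ i ∈ I, G.Adj w i)
    (hc : c ∈ I ∩ V0)
    (hS : IsSideClique G V1 S)
    (hdisj : S ∩ ⋃ i ∈ I \ {c}, closedNbhd G i = ∅) :
    (∀ w ∈ S, G.Adj c w) ∧ IsCliqueSet G ({c} ∪ S) := by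
  obtain ⟨-, hV01, -, -⟩ := hR
  obtain ⟨hSV1, -, hSclique, -⟩ := hS
  have hcS : ∀ w ∈ S, G.Adj c w := fun w hw =>
    adj_of_notMem_biUnion_closedNbhd hmax
      (fun hwc => hV01.ne_of_mem hc.2 (hSV1 hw) hwc.symm)
      (fun hw' => (eq_empty_iff_forall_notMem.mp hdisj) w ⟨hw, hw'⟩)
  exact ⟨hcS, hSclique.singleton_union hcS⟩

/-- If I is a maximal independent set, c ∈ I ∩ V0, and S is a side clique missed by
    the closed neighbourhoods of I \ {c}, then c is adjacent to all of S and
    {c} ∪ S is a clique. -/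
theorem stmt_10 (G : SimpleGraph V) (V0 V1 I S : Set V) (c : V)
    (hR : IsUnipolarRep G V0 V1)
    (hI : IsIndepSetOn G I) (hmax : ∀ w ∉ I, ∃ i ∈ I, G.Adj w i)
    (hc : c ∈ I ∩ V0)
    (hS : IsSideClique G V1 S)
    (hdisj : S ∩ ⋃ i ∈ I \ {c}, closedNbhd G i = ∅) :
    (∀ w ∈ S, G.Adj c w) ∧ IsCliqueSet G ({c} ∪ S) :=
  stmt_10_general G V0 V1 I S c hR hmax hc hS hdisj
end

section
/- Let G be a graph, f : V(G) → [m] a function, and suppose an assignment x : V(G) → {0,1} satisfies: (i) for all non-adjacent u, v: x(u) ∨ x(v) holds whenever f(u) = f(v), and ¬x(u) ∨ ¬x(v) always holds; (ii) for all adjacent u, v with f(u) ≠ f(v): x(u) ∨ x(v) holds. Then setting V0 = {v : x(v) = 1} and V1 = {v : x(v) = 0}, the pair (V0, V1) is a unipolar representation of G and the partition induced by f restricted to V1 groups V1 into its side cliques. -/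
open SimpleGraph Set

variable {V : Type*}

section TwoSat

variable {α : Type*} {G : SimpleGraph V}

theorem isCliqueSet_of_not_adj {S : Set V}
    (h : ∀ u v : V, u ≠ v → ¬ G.Adj u v → u ∉ S ∨ v ∉ S) : IsCliqueSet G S := by
  intro u hu v hv huv
  by_contra hadj
  rcases h u v huv hadj with h | h <;> contradiction

theorem isClusterOn_of_adj_iff {S : Set V} (f : V → α)
    (h : ∀ ⦃u v⦄, u ∈ S → v ∈ S → u ≠ v → (G.Adj u v ↔ f u = f v)) : IsClusterOn G S :=
  fun _ _ _ hu hv hw huv hvw huw =>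
    (h hu hw huw).2 (((h hu hv huv.ne).1 huv).trans ((h hv hw hvw.ne).1 hvw))

theorem isUnipolarRep_of_bool {x : V → Bool} (hclique : IsCliqueSet G {v | x v = true})
    (hcluster : IsClusterOn G {v | x v = false}) :
    IsUnipolarRep G {v | x v = true} {v | x v = false} := by
  refine ⟨?_, ?_, hclique, hcluster⟩
  · ext v
    simp [Bool.eq_false_or_eq_true (x v)]
  · exact Set.disjoint_left.2 fun v hv hv' => by simp_all

theorem adj_iff_eq_of_eq_false {f : V → α} {x : V → Bool}
    (hsame : ∀ u v : V, u ≠ v → ¬ G.Adj u v → f u = f v → x u = true ∨ x v = true)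
    (hdiff : ∀ u v : V, G.Adj u v → f u ≠ f v → x u = true ∨ x v = true)
    {u v : V} (hu : x u = false) (hv : x v = false) (huv : u ≠ v) :
    G.Adj u v ↔ f u = f v := by
  constructor
  · intro hadj
    by_contra hf
    rcases hdiff u v hadj hf with h | h <;> simp_all
  · intro hf
    by_contra hadj
    rcases hsame u v huv hadj hf with h | h <;> simp_all

end TwoSat

/-- A satisfying assignment of the generated 2-SAT clauses yields a unipolar
    representation whose side cliques are the classes of f restricted to V1. -/
theorem stmt_15 (G : SimpleGraph V) (m : ℕ) (f : V → Fin m) (x : V → Bool)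
    (h1 : ∀ u v : V, u ≠ v → ¬ G.Adj u v →
      ((f u = f v → (x u = true ∨ x v = true)) ∧ (x u = false ∨ x v = false)))
    (h2 : ∀ u v : V, G.Adj u v → f u ≠ f v → (x u = true ∨ x v = true)) :
    IsUnipolarRep G {v | x v = true} {v | x v = false} ∧
      ∀ u v : V, x u = false → x v = false → u ≠ v → (G.Adj u v ↔ f u = f v) := by
  have side : ∀ u v : V, x u = false → x v = false → u ≠ v → (G.Adj u v ↔ f u = f v) :=
    fun _ _ => adj_iff_eq_of_eq_false (fun u v huv hadj => (h1 u v huv hadj).1) h2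
  have clique : IsCliqueSet G {v | x v = true} :=
    isCliqueSet_of_not_adj fun u v huv hadj => by
      simpa only [Set.mem_ofPred_eq, Bool.not_eq_true] using (h1 u v huv hadj).2
  exact ⟨isUnipolarRep_of_bool clique (isClusterOn_of_adj_iff f fun u v => side u v), side⟩
end

section
/- Let G be a unipolar graph with a representation having central clique C0 and side cliques C1, ..., Ck. Then the clique number and chromatic number of G satisfy ω(G) = max over i in [k] of ω(G[C0 ∪ Ci]) and χ(G) = max over i in [k] of χ(G[C0 ∪ Ci]) (when k ≥ 1). -/
/-!
Side cliques are pairwise non-adjacent, so every clique of `G` lies in `C0 ∪ Cᵢ` for some `i`,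
and every edge of `G` lies in some `G[C0 ∪ Cᵢ]`. A proper coloring of `G[C0 ∪ Cᵢ]` is injective
on the clique `C0`; after permuting colors, colorings of all pieces agree on `C0` and glue to a
coloring of `G` with the same palette.
-/

open SimpleGraph Set

variable {V : Type*}

section

variable {ι : Type*} {G : SimpleGraph V}

lemma IsCliqueSet.image_val {s : Set V} {T : Set s} (hT : IsCliqueSet (G.induce s) T) :
    IsCliqueSet G (Subtype.val '' T) := by
  rintro _ ⟨u, hu, rfl⟩ _ ⟨v, hv, rfl⟩ hne
  exact hT hu hv (ne_of_apply_ne _ hne)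

lemma IsCliqueSet.preimage_val {s T : Set V} (hT : IsCliqueSet G T) :
    IsCliqueSet (G.induce s) (Subtype.val ⁻¹' T) :=
  fun _ hu _ hv hne => hT hu hv (Subtype.val_injective.ne hne)

lemma cliqueNum'_le_of_forall {m : ℕ} (h : ∀ S, IsCliqueSet G S → S.ncard ≤ m) :
    cliqueNum' G ≤ m :=
  csSup_le ⟨0, ∅, ncard_empty V, fun _ hu => hu.elim⟩ <| by
    rintro _ ⟨S, rfl, hS⟩
    exact h S hS

lemma IsCliqueSet.ncard_le_cliqueNum' [Finite V] {S : Set V} (hS : IsCliqueSet G S) :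
    S.ncard ≤ cliqueNum' G :=
  le_csSup ⟨Nat.card V, by rintro _ ⟨T, rfl, -⟩; exact ncard_le_card T⟩ ⟨S, rfl, hS⟩

lemma cliqueNum'_induce_le [Finite V] (s : Set V) : cliqueNum' (G.induce s) ≤ cliqueNum' G :=
  cliqueNum'_le_of_forall fun T hT => by
    rw [← ncard_image_of_injective T Subtype.val_injective]
    exact hT.image_val.ncard_le_cliqueNum'

lemma cliqueNum'_le_iSup_induce [Finite V] [Finite ι] {S : ι → Set V}
    (h : ∀ T, IsCliqueSet G T → ∃ i, T ⊆ S i) :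
    cliqueNum' G ≤ ⨆ i, cliqueNum' (G.induce (S i)) :=
  cliqueNum'_le_of_forall fun T hT => by
    obtain ⟨i, hTi⟩ := h T hT
    have hT_le : T.ncard ≤ cliqueNum' (G.induce (S i)) := by
      rw [← ncard_preimage_of_injective_subset_range (f := ((↑) : S i → V))
        Subtype.val_injective (by rwa [Subtype.range_coe])]
      exact (hT.preimage_val (s := S i)).ncard_le_cliqueNum'
    exact hT_le.trans
      (le_ciSup (f := fun i => cliqueNum' (G.induce (S i))) (finite_range _).bddAbove i)

lemma chromaticNumber_le_iSup_of_forall_colorable {W : ι → Type*}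
    {H : ∀ i, SimpleGraph (W i)} (h : ∀ n : ℕ, (∀ i, (H i).Colorable n) → G.Colorable n) :
    G.chromaticNumber ≤ ⨆ i, (H i).chromaticNumber := by
  cases hM : ⨆ i, (H i).chromaticNumber with
  | top => exact le_top
  | coe n =>
    refine chromaticNumber_le_iff_colorable.mpr (h n fun i => ?_)
    exact chromaticNumber_le_iff_colorable.mp (hM ▸ le_iSup (fun i => (H i).chromaticNumber) i)

lemma IsCliqueSet.exists_colorings_agree {α : Type*} [Finite α] {K : Set V} {S : ι → Set V}
    (hK : IsCliqueSet G K) (c : ∀ i, (G.induce (K ∪ S i)).Coloring α) (i₀ : ι) :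
    ∃ d : ∀ i, (G.induce (K ∪ S i)).Coloring α,
      ∀ i j v (hv : v ∈ K), d i ⟨v, .inl hv⟩ = d j ⟨v, .inl hv⟩ := by
  -- A coloring is injective on the clique `K`, so permuting colors makes every piece agree
  -- with piece `i₀` on `K`.
  have hinj : ∀ i, Function.Injective fun v : K => c i ⟨v, .inl v.2⟩ := fun i u v huv =>
    by_contra fun hne => (c i).valid (G := G.induce _)
      (show (G.induce _).Adj ⟨u, .inl u.2⟩ ⟨v, .inl v.2⟩ from
        hK u.2 v.2 (Subtype.coe_ne_coe.mpr hne)) huv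
  have : Finite K := .of_injective _ (hinj i₀)
  choose σ hσ using fun i => Equiv.Perm.exists_extending_pair _ _ (hinj i) (hinj i₀)
  refine ⟨fun i => (G.induce _).recolorOfEquiv (σ i) (c i), fun i j v hv => ?_⟩
  exact (hσ i ⟨v, hv⟩).trans (hσ j ⟨v, hv⟩).symm

/-- `p` places every vertex outside `K` in a piece `S (p v)`, and no edge outside `K` joins two
pieces: `G` is glued from the graphs `G[K ∪ S i]` along `K`. -/
structure IsPieceAssignment (G : SimpleGraph V) (K : Set V) (S : ι → Set V) (p : V → ι) :
    Prop where
  mem_piece : ∀ v, v ∉ K → v ∈ S (p v)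
  eq_of_adj : ∀ ⦃u v⦄, G.Adj u v → u ∉ K → v ∉ K → p u = p v

namespace IsPieceAssignment

variable {K : Set V} {S : ι → Set V} {p : V → ι}

lemma mem_union (hP : IsPieceAssignment G K S p) {v : V} {i : ι} (h : v ∈ K ∨ p v = i) :
    v ∈ K ∪ S i := by
  rcases h with hv | rfl
  · exact .inl hv
  · by_cases hv : v ∈ K
    · exact .inl hv
    · exact .inr (hP.mem_piece v hv)

lemma exists_common_piece [Nonempty ι] (hP : IsPieceAssignment G K S p) {u v : V}
    (huv : G.Adj u v) : ∃ i, (u ∈ K ∨ p u = i) ∧ (v ∈ K ∨ p v = i) := by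
  by_cases hu : u ∈ K
  · by_cases hv : v ∈ K
    · exact ⟨Classical.arbitrary ι, .inl hu, .inl hv⟩
    · exact ⟨p v, .inl hu, .inr rfl⟩
  · exact ⟨p u, .inr rfl, (em (v ∈ K)).imp id fun hv => (hP.eq_of_adj huv hu hv).symm⟩

lemma exists_subset_of_isCliqueSet [Nonempty ι] (hP : IsPieceAssignment G K S p) {T : Set V}
    (hT : IsCliqueSet G T) : ∃ i, T ⊆ K ∪ S i := by
  by_cases hTK : T ⊆ K
  · exact ⟨Classical.arbitrary ι, hTK.trans subset_union_left⟩
  · obtain ⟨v, hvT, hvK⟩ := not_subset.mp hTK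
    refine ⟨p v, fun u huT => hP.mem_union ?_⟩
    by_cases huK : u ∈ K
    · exact .inl huK
    by_cases huv : u = v
    · exact .inr (huv ▸ rfl)
    exact .inr (hP.eq_of_adj (hT huT hvT huv) huK hvK)

lemma nonempty_coloring [Nonempty ι] (hP : IsPieceAssignment G K S p) {α : Type*}
    (d : ∀ i, (G.induce (K ∪ S i)).Coloring α)
    (hd : ∀ i j v (hv : v ∈ K), d i ⟨v, .inl hv⟩ = d j ⟨v, .inl hv⟩) :
    Nonempty (G.Coloring α) := by
  classical
  let f : V → α := fun v =>
    if hv : v ∈ K then d (Classical.arbitrary ι) ⟨v, .inl hv⟩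
    else d (p v) ⟨v, .inr (hP.mem_piece v hv)⟩
  have hf : ∀ {v i} (h : v ∈ K ∨ p v = i), f v = d i ⟨v, hP.mem_union h⟩ := by
    rintro v i (hv | rfl)
    · simp only [f, dif_pos hv]
      exact hd _ _ v hv
    · by_cases hv : v ∈ K
      · simp only [f, dif_pos hv]
        exact hd _ _ v hv
      · simp only [f, dif_neg hv]
  refine ⟨Coloring.mk f fun {u v} huv => ?_⟩
  obtain ⟨i, hu, hv⟩ := hP.exists_common_piece huv
  rw [hf hu, hf hv]
  exact (d i).valid huv

lemma cliqueNum'_eq [Finite V] [Finite ι] [Nonempty ι] (hP : IsPieceAssignment G K S p) :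
    cliqueNum' G = ⨆ i, cliqueNum' (G.induce (K ∪ S i)) :=
  le_antisymm (cliqueNum'_le_iSup_induce fun _ => hP.exists_subset_of_isCliqueSet)
    (ciSup_le fun _ => cliqueNum'_induce_le _)

lemma chromaticNumber_eq [Nonempty ι] (hP : IsPieceAssignment G K S p) (hK : IsCliqueSet G K) :
    G.chromaticNumber = ⨆ i, (G.induce (K ∪ S i)).chromaticNumber := by
  refine le_antisymm (chromaticNumber_le_iSup_of_forall_colorable fun n hn => ?_)
    (iSup_le fun _ => chromaticNumber_mono_of_hom (Embedding.induce _).toHom)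
  obtain ⟨d, hd⟩ := hK.exists_colorings_agree (fun i => (hn i).some) (Classical.arbitrary ι)
  exact hP.nonempty_coloring d hd

end IsPieceAssignment

lemma IsSideClique.eq_of_mem_s17 {V1 D D' : Set V} {v : V} (hD : IsSideClique G V1 D)
    (hD' : IsSideClique G V1 D') (hvD : v ∈ D) (hvD' : v ∈ D') : D = D' := by
  have key : ∀ {D D'}, IsSideClique G V1 D → IsSideClique G V1 D' → v ∈ D → v ∈ D' →
      D ⊆ D' := by
    intro D D' hD hD' hvD hvD' w hw
    by_cases hwv : w = v
    · exact hwv ▸ hvD'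
    · exact hD'.2.2.2 hvD' (hD.1 hw) (hD.2.2.1 hvD hw (Ne.symm hwv))
  exact (key hD hD' hvD hvD').antisymm (key hD' hD hvD' hvD)

lemma IsClusterOn.exists_isSideClique {V1 : Set V} (hCl : IsClusterOn G V1) {v : V}
    (hv : v ∈ V1) : ∃ D, IsSideClique G V1 D ∧ v ∈ D := by
  refine ⟨{w | w ∈ V1 ∧ (w = v ∨ G.Adj v w)}, ⟨fun w hw => hw.1, ⟨v, hv, .inl rfl⟩, ?_, ?_⟩,
    hv, .inl rfl⟩
  · rintro u ⟨hu, rfl | hvu⟩ w ⟨hw, rfl | hvw⟩ huw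
    · exact absurd rfl huw
    · exact hvw
    · exact hvu.symm
    · exact hCl hu hv hw hvu.symm hvw huw
  · rintro u ⟨hu, rfl | hvu⟩ w hw huw
    · exact ⟨hw, .inr huw⟩
    · by_cases hwv : w = v
      · exact ⟨hw, .inl hwv⟩
      · exact ⟨hw, .inr (hCl hv hu hw hvu huw (Ne.symm hwv))⟩

lemma IsUnipolarRep.exists_isPieceAssignment [Nonempty ι] {C0 V1 : Set V}
    (hR : IsUnipolarRep G C0 V1) {C : ι → Set V}
    (hall : ∀ D, IsSideClique G V1 D → ∃ i, C i = D) : ∃ p, IsPieceAssignment G C0 C p := by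
  obtain ⟨hcover, -, -, hCl⟩ := hR
  have hV1 : ∀ v, v ∉ C0 → v ∈ V1 := fun v hv =>
    (hcover.symm ▸ mem_univ v : v ∈ C0 ∪ V1).resolve_left hv
  -- Side cliques may repeat among the `C i`; fixing one index per side clique makes `p`
  -- constant on each of them.
  have hidx : ∀ D, ∃ i, IsSideClique G V1 D → C i = D := fun D => by
    by_cases hD : IsSideClique G V1 D
    · exact (hall D hD).imp fun _ h _ => h
    · exact ⟨Classical.arbitrary ι, fun h => absurd h hD⟩
  choose idx hidx using hidx
  have hside : ∀ v, ∃ D, v ∉ C0 → IsSideClique G V1 D ∧ v ∈ D := fun v => by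
    by_cases hv : v ∈ C0
    · exact ⟨∅, fun h => absurd hv h⟩
    · exact (hCl.exists_isSideClique (hV1 v hv)).imp fun _ h _ => h
  choose D hD using hside
  refine ⟨fun v => idx (D v), fun v hv => ?_, fun u v huv hu hv => ?_⟩
  · rw [hidx _ (hD v hv).1]
    exact (hD v hv).2
  · have hvDu : v ∈ D u := (hD u hu).1.2.2.2 (hD u hu).2 (hV1 v hv) huv
    exact congrArg idx ((hD u hu).1.eq_of_mem_s17 (hD v hv).1 hvDu (hD v hv).2)

end

theorem stmt_17_general [Fintype V] (G : SimpleGraph V) (C0 V1 : Set V) (k : ℕ) (hk : 1 ≤ k)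
    (C : Fin k → Set V)
    (hR : IsUnipolarRep G C0 V1)
    (hall : ∀ D : Set V, IsSideClique G V1 D → ∃ i, C i = D) :
    (cliqueNum' G = ⨆ i : Fin k, cliqueNum' (G.induce (C0 ∪ C i))) ∧
      G.chromaticNumber = ⨆ i : Fin k, (G.induce (C0 ∪ C i)).chromaticNumber := by
  have : Nonempty (Fin k) := ⟨⟨0, hk⟩⟩
  obtain ⟨p, hP⟩ := hR.exists_isPieceAssignment hall
  exact ⟨hP.cliqueNum'_eq, hP.chromaticNumber_eq hR.2.2.1⟩

/-- For a unipolar graph with central clique C0 and side cliques C 0, …, C (k−1),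
    both ω and χ are the maxima over the co-bipartite pieces G[C0 ∪ Cᵢ]. -/
theorem stmt_17 [Fintype V] (G : SimpleGraph V) (C0 V1 : Set V) (k : ℕ) (hk : 1 ≤ k)
    (C : Fin k → Set V)
    (hR : IsUnipolarRep G C0 V1)
    (hside : ∀ i, IsSideClique G V1 (C i))
    (hall : ∀ D : Set V, IsSideClique G V1 D → ∃ i, C i = D) :
    (cliqueNum' G = ⨆ i : Fin k, cliqueNum' (G.induce (C0 ∪ C i))) ∧
      G.chromaticNumber = ⨆ i : Fin k, (G.induce (C0 ∪ C i)).chromaticNumber :=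
  stmt_17_general G C0 V1 k hk C hR hall
end

section
/- Every unipolar graph is perfect, that is, for every induced subgraph H of a unipolar graph G, χ(H) = ω(H). -/
open SimpleGraph Set

variable {V : Type*}

/-!
Colour the central clique `V0` injectively with `ω` colours. A side clique `C` must then be
coloured injectively so that no vertex gets the colour of one of its neighbours in `V0`; side
cliques have no edges between them, so these colourings combine. Hall's condition holds: a
colour forbidden at every vertex of `A ⊆ C` is, since `V0` is coloured injectively, the colour
of one vertex of `V0` adjacent to all of `A`. These common neighbours form a clique together
with `A`, so at most `ω - |A|` colours are forbidden throughout `A`. Unipolarity passes to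
induced subgraphs, and `ω ≤ χ` holds in any graph.
-/

open Classical in
theorem card_le_card_avoiding_of_isClique [Fintype V] {G : SimpleGraph V} {α : Type*}
    [Fintype α] {K C : Set V} (hK : G.IsClique K) (hC : G.IsClique C) (hKC : Disjoint K C)
    {f : V → α} (hf : Set.InjOn f K)
    (hω : ∀ s : Finset V, G.IsClique (s : Set V) → s.card ≤ Fintype.card α)
    (A : Finset C) :
    A.card ≤
      (Finset.univ.filter fun x => ∃ c ∈ A, ∀ u ∈ K, G.Adj c u → f u ≠ x).card := by
  rcases A.eq_empty_or_nonempty with rfl | ⟨c₀, hc₀⟩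
  · simp
  set J : Finset V := Finset.univ.filter fun u => u ∈ K ∧ ∀ c ∈ A, G.Adj c u
  set S : Finset V := A.map (Function.Embedding.subtype _)
  have hSJ : Disjoint S J := by
    simp only [Finset.disjoint_left, S, J, Finset.mem_map, Finset.mem_filter]
    rintro _ ⟨c, -, rfl⟩ hcK
    exact hKC.notMem_of_mem_right c.2 hcK.2.1
  have hclique : G.IsClique ((S ∪ J : Finset V) : Set V) := by
    rw [Finset.coe_union, IsClique, Set.pairwise_union]
    refine ⟨hC.subset ?_, hK.subset ?_, ?_⟩
    · intro v hv
      obtain ⟨c, -, rfl⟩ := Finset.mem_map.mp hv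
      exact c.2
    · intro u hu
      exact (Finset.mem_filter.mp hu).2.1
    · intro v hv u hu _
      obtain ⟨c, hc, rfl⟩ := Finset.mem_map.mp hv
      have hcu := (Finset.mem_filter.mp hu).2.2 c hc
      exact ⟨hcu, hcu.symm⟩
  have hcover : (J.image f)ᶜ ⊆
      Finset.univ.filter fun x => ∃ c ∈ A, ∀ u ∈ K, G.Adj c u → f u ≠ x := by
    intro x hx
    simp only [J, Finset.mem_compl, Finset.mem_univ, true_and, Finset.mem_image,
      Finset.mem_filter, not_exists, not_and] at hx ⊢
    by_contra! h
    obtain ⟨u, huK, -, rfl⟩ := h c₀ hc₀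
    refine hx u ⟨huK, fun c hc => ?_⟩ rfl
    obtain ⟨u', hu'K, hadj, hfu'⟩ := h c hc
    rwa [← hf hu'K huK hfu']
  have hAJ : A.card + J.card ≤ Fintype.card α := by
    simpa [Finset.card_union_of_disjoint hSJ, S] using hω _ hclique
  calc A.card ≤ Fintype.card α - J.card := by omega
    _ ≤ Fintype.card α - (J.image f).card := Nat.sub_le_sub_left Finset.card_image_le _
    _ = (J.image f)ᶜ.card := (Finset.card_compl _).symm
    _ ≤ _ := Finset.card_le_card hcover

theorem exists_injOn_avoiding_of_isClique [Finite V] {G : SimpleGraph V} {α : Type*}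
    [Fintype α] [Nonempty α] {K C : Set V} (hK : G.IsClique K) (hC : G.IsClique C)
    (hKC : Disjoint K C) {f : V → α} (hf : Set.InjOn f K)
    (hω : ∀ s : Finset V, G.IsClique (s : Set V) → s.card ≤ Fintype.card α) :
    ∃ g : V → α, Set.InjOn g C ∧ ∀ c ∈ C, ∀ u ∈ K, G.Adj c u → g c ≠ f u := by
  classical
  cases nonempty_fintype V
  obtain ⟨g, hg_inj, hg⟩ := (Fintype.all_card_le_filter_rel_iff_exists_injective
    (fun (c : C) x => ∀ u ∈ K, G.Adj c u → f u ≠ x)).mp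
    (card_le_card_avoiding_of_isClique hK hC hKC hf hω)
  refine ⟨fun v => if h : v ∈ C then g ⟨v, h⟩ else Classical.arbitrary α, ?_, ?_⟩
  · intro a ha b hb hab
    simp only [dif_pos ha, dif_pos hb] at hab
    exact congrArg Subtype.val (hg_inj hab)
  · intro c hc u hu hcu
    simpa only [dif_pos hc] using (hg ⟨c, hc⟩ u hu hcu).symm

theorem cliqueNum'_eq_cliqueNum [Finite V] (G : SimpleGraph V) : cliqueNum' G = G.cliqueNum := by
  unfold cliqueNum' cliqueNum
  congr 1
  ext n
  constructor
  · rintro ⟨S, rfl, hS⟩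
    refine ⟨S.toFinite.toFinset, ?_, ?_⟩
    · rw [Set.Finite.coe_toFinset]
      exact hS
    · simp [Set.ncard_eq_toFinset_card S]
  · rintro ⟨s, hs⟩
    exact ⟨s, by simp [hs.card_eq], hs.isClique⟩

def sideClique (G : SimpleGraph V) (V1 : Set V) (v : V) : Set V :=
  {u | u ∈ V1 ∧ (u = v ∨ G.Adj u v)}

section SideClique

variable {G : SimpleGraph V} {V1 : Set V}

theorem self_mem_sideClique {v : V} (hv : v ∈ V1) : v ∈ sideClique G V1 v :=
  ⟨hv, Or.inl rfl⟩

theorem sideClique_subset (v : V) : sideClique G V1 v ⊆ V1 := fun _ hu => hu.1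

namespace IsClusterOn

theorem isClique_sideClique (hC : IsClusterOn G V1) {v : V} (hv : v ∈ V1) :
    G.IsClique (sideClique G V1 v) := by
  rintro u ⟨hu, rfl | huv⟩ w ⟨hw, rfl | hwv⟩ huw
  · exact absurd rfl huw
  · exact hwv.symm
  · exact huv
  · exact hC hu hv hw huv hwv.symm huw

theorem sideClique_subset_of_adj (hC : IsClusterOn G V1) {a b : V} (ha : a ∈ V1)
    (hb : b ∈ V1) (hab : G.Adj a b) : sideClique G V1 a ⊆ sideClique G V1 b := by
  rintro w ⟨hw, rfl | hwa⟩
  · exact ⟨hw, Or.inr hab⟩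
  · by_cases hwb : w = b
    · exact ⟨hw, Or.inl hwb⟩
    · exact ⟨hw, Or.inr (hC hw ha hb hwa hab hwb)⟩

theorem sideClique_eq_of_adj (hC : IsClusterOn G V1) {a b : V} (ha : a ∈ V1) (hb : b ∈ V1)
    (hab : G.Adj a b) : sideClique G V1 a = sideClique G V1 b :=
  (hC.sideClique_subset_of_adj ha hb hab).antisymm (hC.sideClique_subset_of_adj hb ha hab.symm)

end IsClusterOn

end SideClique

theorem IsUnipolarRep.colorable_cliqueNum [Finite V] {G : SimpleGraph V} {V0 V1 : Set V}
    (h : IsUnipolarRep G V0 V1) : G.Colorable G.cliqueNum := by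
  classical
  obtain ⟨hU, hD, hK, hC⟩ := h
  rcases isEmpty_or_nonempty V with hV | ⟨⟨v⟩⟩
  · exact .of_isEmpty _
  have hω (s : Finset V) (hs : G.IsClique (s : Set V)) :
      s.card ≤ Fintype.card (Fin G.cliqueNum) := by
    simpa using hs.card_le_cliqueNum
  have : Nonempty (Fin G.cliqueNum) :=
    ⟨⟨0, Nat.lt_of_lt_of_le Nat.zero_lt_one (by simpa using hω {v} (by simp))⟩⟩
  -- Hall's theorem with no forbidden colours colours `V0` injectively.
  obtain ⟨f, hf, -⟩ := exists_injOn_avoiding_of_isClique (Set.pairwise_empty _) hK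
    (Set.empty_disjoint V0)
    (Set.injOn_empty fun _ : V => Classical.arbitrary (Fin G.cliqueNum)) hω
  choose! g hg using fun C (hC : C ⊆ V1 ∧ G.IsClique C) =>
    exists_injOn_avoiding_of_isClique hK hC.2 (hD.mono_right hC.1) hf hω
  have hV1 {v : V} (hv : v ∉ V0) : v ∈ V1 :=
    (hU ▸ Set.mem_univ v : v ∈ V0 ∪ V1).resolve_left hv
  have hgside {v : V} (hv : v ∉ V0) := hg (sideClique G V1 v)
    ⟨sideClique_subset v, hC.isClique_sideClique (hV1 hv)⟩
  refine ⟨Coloring.mk (fun v => if v ∈ V0 then f v else g (sideClique G V1 v) v) ?_⟩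
  intro a b hab
  by_cases ha : a ∈ V0 <;> by_cases hb : b ∈ V0 <;> simp only [ha, hb, if_true, if_false]
  · exact hf.ne ha hb hab.ne
  · exact ((hgside hb).2 b (self_mem_sideClique (hV1 hb)) a ha hab.symm).symm
  · exact (hgside ha).2 a (self_mem_sideClique (hV1 ha)) b hb hab
  · rw [hC.sideClique_eq_of_adj (hV1 ha) (hV1 hb) hab]
    exact (hgside hb).1.ne ⟨hV1 ha, Or.inr hab⟩ (self_mem_sideClique (hV1 hb)) hab.ne

theorem IsUnipolar.induce {G : SimpleGraph V} (hG : IsUnipolar G) (W : Set V) :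
    IsUnipolar (G.induce W) := by
  obtain ⟨V0, V1, hU, hD, hK, hC⟩ := hG
  refine ⟨Subtype.val ⁻¹' V0, Subtype.val ⁻¹' V1, ?_, hD.preimage _, ?_, ?_⟩
  · rw [← Set.preimage_union, hU, Set.preimage_univ]
  · exact fun u hu v hv huv => hK hu hv (Subtype.val_injective.ne huv)
  · exact fun u v w hu hv hw huv hvw huw => hC hu hv hw huv hvw (Subtype.val_injective.ne huw)

/-- Every unipolar graph is perfect: χ(H) = ω(H) for every induced subgraph H. -/
theorem stmt_18 [Fintype V] (G : SimpleGraph V) (hG : IsUnipolar G) (W : Set V) :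
    (G.induce W).chromaticNumber = (cliqueNum' (G.induce W) : ℕ∞) := by
  obtain ⟨V0, V1, hrep⟩ := hG.induce W
  rw [cliqueNum'_eq_cliqueNum]
  exact le_antisymm hrep.colorable_cliqueNum.chromaticNumber_le cliqueNum_le_chromaticNumber
end
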